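/- arXiv:math/0606140 — 4 statements merged into one kernel-verified Lean document; each statement's English description precedes it below -/
import Mathlib

section
/- Define β(d, a₁, …, a_r) = ∑_{i₁=1}^{d} ⋯ ∑_{i_r=1}^{d} (-1)^{i₁+⋯+i_r} C(d, i₁+⋯+i_r) · i₁^{a₁} ⋯ i_r^{a_r}. If a₁ + ⋯ + a_r = d - r + 1, then β(d, a₁, …, a_r) = (-1)^d · a₁! ⋯ a_r!. -/
open Finset

namespace Stmt3Aux

noncomputable def D : (ℕ → ℚ) →ₗ[ℚ] (ℕ → ℚ) where
  toFun f := fun t => f (t + 1) - f t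
  map_add' f g := by funext t; simp; ring
  map_smul' c f := by funext t; simp; ring

@[simp] lemma D_apply (f : ℕ → ℚ) (t : ℕ) : D f t = f (t + 1) - f t := rfl

/-- `h a t = t ^ a`. -/
def h (a : ℕ) : ℕ → ℚ := fun t => (t : ℚ) ^ a

lemma D_h (a : ℕ) : D (h a) = ∑ k ∈ range a, (a.choose k : ℚ) • h k := by
  funext t
  have := add_pow (t : ℚ) 1 a
  simp only [one_pow, mul_one] at this
  have : ((t : ℚ) + 1) ^ a = ∑ k ∈ range (a + 1), (t : ℚ) ^ k * (a.choose k : ℚ) := this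
  rw [sum_range_succ] at this
  simp only [Nat.choose_self, Nat.cast_one, mul_one] at this
  simp only [D_apply, h, Finset.sum_apply, Pi.smul_apply, smul_eq_mul]
  push_cast
  rw [this, add_sub_cancel_right]
  exact Finset.sum_congr rfl fun k _ => mul_comm _ _

lemma D_pow_h_eq_zero : ∀ a m : ℕ, a < m → (D ^ m) (h a) = 0 := by
  intro a
  induction a using Nat.strong_induction_on with
  | _ a ih =>
    intro m hm
    obtain ⟨m', rfl⟩ : ∃ m', m = m' + 1 := ⟨m - 1, by omega⟩
    rw [pow_succ, Module.End.mul_apply, D_h, map_sum]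
    apply Finset.sum_eq_zero
    intro k hk
    have hk' := mem_range.1 hk
    rw [map_smul, ih k hk' m' (by omega), smul_zero]

lemma D_pow_h_self (a : ℕ) : (D ^ a) (h a) = fun _ => (a.factorial : ℚ) := by
  induction a with
  | zero => funext t; simp [h]
  | succ a ih =>
    rw [pow_succ, Module.End.mul_apply, D_h, sum_range_succ, map_add, map_sum, map_smul,
      Finset.sum_eq_zero (fun k hk => by
        have hk' := mem_range.1 hk
        rw [map_smul, D_pow_h_eq_zero k a hk', smul_zero]), zero_add, ih]
    funext t
    simp only [Pi.smul_apply, smul_eq_mul, Nat.choose_succ_self_right, Nat.factorial_succ]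
    push_cast
    ring


lemma D_shift (f : ℕ → ℚ) : D (fun s => f (s + 1)) = fun s => D f (s + 1) := by
  funext t; simp

lemma D_pow_shift (f : ℕ → ℚ) (m : ℕ) :
    (D ^ m) (fun s => f (s + 1)) = fun t => (D ^ m) f (t + 1) := by
  induction m generalizing f with
  | zero => simp
  | succ m ih =>
    rw [pow_succ, Module.End.mul_apply, Module.End.mul_apply, D_shift, ih (D f)]

lemma D_pow_succ_apply (f : ℕ → ℚ) (m t : ℕ) :
    (D ^ (m + 1)) f t = (D ^ m) f (t + 1) - (D ^ m) f t := by
  rw [pow_succ', Module.End.mul_apply, D_apply]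

lemma choose_shuffle (n : ℕ) (G : ℕ → ℚ) :
    ∑ j ∈ range (n + 2), ((n + 1).choose j : ℚ) * G j
      = ∑ j ∈ range (n + 1), (n.choose j : ℚ) * G j
        + ∑ j ∈ range (n + 1), (n.choose j : ℚ) * G (j + 1) := by
  rw [Finset.sum_range_succ' (fun j => (((n + 1).choose j : ℕ) : ℚ) * G j) (n + 1)]
  have e1 : ∑ j ∈ range (n + 1), (((n + 1).choose (j + 1) : ℕ) : ℚ) * G (j + 1)
      = ∑ j ∈ range (n + 1), ((n.choose j : ℚ) * G (j + 1))
        + ∑ j ∈ range (n + 1), ((n.choose (j + 1) : ℚ) * G (j + 1)) := by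
    rw [← Finset.sum_add_distrib]
    refine Finset.sum_congr rfl fun j _ => ?_
    rw [Nat.choose_succ_succ]; push_cast; ring
  rw [e1]
  have e2 : ∑ j ∈ range (n + 1), ((n.choose (j + 1) : ℚ) * G (j + 1))
        + (((n + 1).choose 0 : ℕ) : ℚ) * G 0
      = ∑ j ∈ range (n + 1), (n.choose j : ℚ) * G j := by
    rw [Finset.sum_range_succ' (fun j => ((n.choose j : ℕ) : ℚ) * G j) n]
    have e3 : ∑ j ∈ range (n + 1), ((n.choose (j + 1) : ℚ) * G (j + 1))
        = ∑ j ∈ range n, ((n.choose (j + 1) : ℚ) * G (j + 1)) := by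
      rw [Finset.sum_range_succ]; simp [Nat.choose_succ_self]
    rw [e3]; simp
  linarith [e2]

/-- Newton's forward-difference formula. -/
lemma newton : ∀ (j : ℕ) (f : ℕ → ℚ),
    f j = ∑ m ∈ range (j + 1), (j.choose m : ℚ) * (D ^ m) f 0 := by
  intro j
  induction j with
  | zero => intro f; simp
  | succ j ih =>
    intro f
    have h2 : ∀ m : ℕ, (D ^ m) (fun s => f (s + 1)) 0 = (D ^ m) f 0 + (D ^ (m + 1)) f 0 := by
      intro m
      rw [D_pow_shift f m]
      have := D_pow_succ_apply f m 0
      simp only [zero_add] at this ⊢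
      rw [this]; ring
    calc f (j + 1) = ∑ m ∈ range (j + 1), (j.choose m : ℚ) * (D ^ m) (fun s => f (s + 1)) 0 :=
          ih (fun s => f (s + 1))
      _ = ∑ m ∈ range (j + 1), (j.choose m : ℚ) * (D ^ m) f 0
            + ∑ m ∈ range (j + 1), (j.choose m : ℚ) * (D ^ (m + 1)) f 0 := by
          rw [← Finset.sum_add_distrib]
          refine Finset.sum_congr rfl fun m _ => ?_
          rw [h2]; ring
      _ = ∑ m ∈ range (j + 2), ((j + 1).choose m : ℚ) * (D ^ m) f 0 :=
          (choose_shuffle j (fun m => (D ^ m) f 0)).symm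

/-- Alternating-sum formula for the `n`-th difference. -/
lemma alt_sum : ∀ (n : ℕ) (g : ℕ → ℚ),
    ∑ j ∈ range (n + 1), (-1 : ℚ) ^ j * (n.choose j : ℚ) * g j = (-1 : ℚ) ^ n * (D ^ n) g 0 := by
  intro n
  induction n with
  | zero => intro g; simp
  | succ n ih =>
    intro g
    have h2 := ih (D g)
    have h3 : (D ^ (n + 1)) g 0 = (D ^ n) (D g) 0 := by rw [pow_succ, Module.End.mul_apply]
    have h5 : ∑ j ∈ range (n + 1), (-1 : ℚ) ^ j * (n.choose j : ℚ) * D g j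
        = ∑ j ∈ range (n + 1), (-1 : ℚ) ^ j * (n.choose j : ℚ) * g (j + 1)
          - ∑ j ∈ range (n + 1), (-1 : ℚ) ^ j * (n.choose j : ℚ) * g j := by
      rw [← Finset.sum_sub_distrib]
      refine Finset.sum_congr rfl fun j _ => ?_
      rw [D_apply]; ring
    have h6 := choose_shuffle n (fun j => (-1 : ℚ) ^ j * g j)
    have h7 : ∑ j ∈ range (n + 2), ((n + 1).choose j : ℚ) * ((-1 : ℚ) ^ j * g j)
        = ∑ j ∈ range (n + 2), (-1 : ℚ) ^ j * ((n + 1).choose j : ℚ) * g j := by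
      refine Finset.sum_congr rfl fun j _ => by ring
    have h8 : ∑ j ∈ range (n + 1), (n.choose j : ℚ) * ((-1 : ℚ) ^ j * g j)
        = ∑ j ∈ range (n + 1), (-1 : ℚ) ^ j * (n.choose j : ℚ) * g j := by
      refine Finset.sum_congr rfl fun j _ => by ring
    have h9 : ∑ j ∈ range (n + 1), (n.choose j : ℚ) * ((-1 : ℚ) ^ (j + 1) * g (j + 1))
        = -∑ j ∈ range (n + 1), (-1 : ℚ) ^ j * (n.choose j : ℚ) * g (j + 1) := by
      rw [← Finset.sum_neg_distrib]
      refine Finset.sum_congr rfl fun j _ => by ring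
    rw [h3]
    rw [h7] at h6
    rw [h8, h9] at h6
    linear_combination h6 + h5 - h2



/-- range-version hockey stick -/
lemma sum_range_choose_eq (n q : ℕ) : ∑ k ∈ range (n + 1), k.choose q = (n + 1).choose (q + 1) := by
  rw [← Nat.sum_Icc_choose n q]
  symm
  apply Finset.sum_subset
  · intro x hx
    rw [Finset.mem_Icc] at hx
    rw [Finset.mem_range]; omega
  · intro x hx hx2
    rw [Finset.mem_range] at hx
    rw [Finset.mem_Icc] at hx2
    exact Nat.choose_eq_zero_of_lt (by omega)

lemma dual_vandermonde : ∀ t p q : ℕ,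
    ∑ jk ∈ Finset.HasAntidiagonal.antidiagonal t, (jk.1.choose p) * (jk.2.choose q) = (t + 1).choose (p + q + 1) := by
  intro t
  induction t with
  | zero =>
    intro p q
    simp only [Finset.Nat.antidiagonal_zero, Finset.sum_singleton]
    match p, q with
    | 0, 0 => simp
    | p + 1, q => simp [Nat.choose_eq_zero_of_lt]
    | 0, q + 1 => simp [Nat.choose_eq_zero_of_lt, Nat.choose_eq_zero_of_lt (show 1 < q+2 by omega)]
  | succ t ih =>
    intro p q
    match p with
    | 0 =>
      rw [Finset.Nat.sum_antidiagonal_eq_sum_range_succ_mk]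
      simp only [Nat.choose_zero_right, one_mul]
      have h1 : ∑ x ∈ range ((t + 1).succ), (t + 1 - x).choose q
          = ∑ x ∈ range (t + 1 + 1), (t + 1 + 1 - 1 - x).choose q := by
        apply Finset.sum_congr rfl
        intro x _
        norm_num
      rw [h1, Finset.sum_range_reflect (fun k => Nat.choose k q) (t + 1 + 1),
        sum_range_choose_eq (t + 1) q]
      norm_num
    | p + 1 =>
      rw [Finset.Nat.sum_antidiagonal_succ]
      simp only [Nat.choose_eq_zero_of_lt (show 0 < p + 1 by omega), zero_mul, zero_add]
      have e1 : ∑ jk ∈ Finset.HasAntidiagonal.antidiagonal t, ((jk.1 + 1).choose (p + 1)) * (jk.2.choose q)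
          = ∑ jk ∈ Finset.HasAntidiagonal.antidiagonal t, ((jk.1.choose p) * (jk.2.choose q)
            + (jk.1.choose (p + 1)) * (jk.2.choose q)) := by
        apply Finset.sum_congr rfl
        intro jk _
        rw [Nat.choose_succ_succ, add_mul]
      rw [e1, Finset.sum_add_distrib, ih p q, ih (p + 1) q]
      rw [show p + 1 + q + 1 = (p + q + 1) + 1 by omega]
      rw [Nat.choose_succ_succ (t + 1) (p + q + 1)]

/-- finite difference coefficients of `t ↦ t^a`, taken at 1. -/
noncomputable def e (a m : ℕ) : ℚ := (D ^ m) (h a) 1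

lemma e_zero (a m : ℕ) (hm : a < m) : e a m = 0 := by
  rw [e, D_pow_h_eq_zero a m hm]; rfl

lemma e_self (a : ℕ) : e a a = (a.factorial : ℚ) := by
  rw [e, D_pow_h_self]

lemma newton_pow (a j : ℕ) :
    ((j + 1 : ℕ) : ℚ) ^ a = ∑ m ∈ range (j + 1), (j.choose m : ℚ) * e a m := by
  have hn := newton j (fun s => h a (s + 1))
  have h2 : ∀ m ∈ range (j + 1), (j.choose m : ℚ) * (D ^ m) (fun s => h a (s + 1)) 0
      = (j.choose m : ℚ) * e a m := by
    intro m _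
    rw [D_pow_shift (h a) m]
    rfl
  rw [Finset.sum_congr rfl h2] at hn
  calc ((j + 1 : ℕ) : ℚ) ^ a = (fun s => h a (s + 1)) j := by simp [h]
    _ = _ := hn

lemma telescope (B : ℕ → ℚ) (n : ℕ) :
    ∑ m ∈ range (n + 1), (-1 : ℚ) ^ m * (B m + B (m + 1)) = B 0 + (-1 : ℚ) ^ n * B (n + 1) := by
  induction n with
  | zero => norm_num
  | succ n ih => rw [Finset.sum_range_succ, ih]; ring

lemma e_eq (a m : ℕ) : e a m = (D ^ m) (h a) 0 + (D ^ (m + 1)) (h a) 0 := by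
  have h1 := D_pow_succ_apply (h a) m 0
  simp only [zero_add] at h1
  rw [e, h1]; ring

lemma alt_e_sum (a n : ℕ) (han : a ≤ n) :
    ∑ m ∈ range (n + 1), (-1 : ℚ) ^ m * e a m = if a = 0 then 1 else 0 := by
  have h1 : ∀ m, e a m = (D ^ m) (h a) 0 + (D ^ (m + 1)) (h a) 0 := e_eq a
  calc ∑ m ∈ range (n + 1), (-1 : ℚ) ^ m * e a m
      = ∑ m ∈ range (n + 1), (-1 : ℚ) ^ m * ((D ^ m) (h a) 0 + (D ^ (m + 1)) (h a) 0) := by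
        exact Finset.sum_congr rfl fun m _ => by rw [h1]
    _ = (D ^ 0) (h a) 0 + (-1 : ℚ) ^ n * (D ^ (n + 1)) (h a) 0 :=
        telescope (fun m => (D ^ m) (h a) 0) n
    _ = if a = 0 then 1 else 0 := by
        rw [D_pow_h_eq_zero a (n + 1) (by omega)]
        simp only [pow_zero, Module.End.one_apply, Pi.zero_apply, mul_zero, add_zero]
        cases a with
        | zero => simp [h]
        | succ a => simp [h]

/-- the sequence `j ↦ C(j,t)` as a `ℚ`-valued function -/
def g (t : ℕ) : ℕ → ℚ := fun j => (j.choose t : ℚ)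

lemma D_g_succ (t : ℕ) : D (g (t + 1)) = g t := by
  funext j
  simp only [D_apply, g, Nat.choose_succ_succ j t]
  push_cast; ring

lemma D_g_zero : D (g 0) = 0 := by
  funext j; simp [g]

lemma D_pow_g (t : ℕ) : ∀ n : ℕ, t < n → (D ^ n) (g t) = 0 := by
  induction t with
  | zero =>
    intro n hn
    obtain ⟨k, rfl⟩ : ∃ k, n = k + 1 := ⟨n - 1, by omega⟩
    rw [pow_succ, Module.End.mul_apply, D_g_zero, map_zero]
  | succ t ih =>
    intro n hn
    obtain ⟨k, rfl⟩ : ∃ k, n = k + 1 := ⟨n - 1, by omega⟩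
    rw [pow_succ, Module.End.mul_apply, D_g_succ, ih k (by omega)]

lemma alt_choose_sum (n t : ℕ) (ht : t < n) :
    ∑ j ∈ range (n + 1), (-1 : ℚ) ^ j * (n.choose j : ℚ) * (j.choose t : ℚ) = 0 := by
  have := alt_sum n (g t)
  rw [D_pow_g t n ht] at this
  simpa [g] using this

/-- `T` vanishes for large `t`. -/
lemma T_zero (d t : ℕ) (ht : d ≤ t) :
    ∑ s ∈ Icc 1 d, (-1 : ℚ) ^ s * (d.choose s : ℚ) * ((s - 1).choose t : ℚ) = 0 := by
  apply Finset.sum_eq_zero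
  intro s hs
  rw [Finset.mem_Icc] at hs
  rw [Nat.choose_eq_zero_of_lt (show s - 1 < t by omega)]
  simp

lemma Icc_sum_eq_range (dd : ℕ) (f : ℕ → ℚ) :
    ∑ s ∈ Icc 1 dd, f s = ∑ j ∈ range dd, f (j + 1) := by
  induction dd with
  | zero => simp
  | succ dd ih =>
    rw [Finset.sum_Icc_succ_top (by omega), ih, Finset.sum_range_succ]

/-- The key single-sum evaluation. -/
lemma T_eq (d t : ℕ) (ht : t < d) :
    ∑ s ∈ Icc 1 d, (-1 : ℚ) ^ s * (d.choose s : ℚ) * ((s - 1).choose t : ℚ)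
      = (-1 : ℚ) ^ (t + 1) := by
  induction d, ht using Nat.le_induction with
  | base =>
    rw [Finset.sum_eq_single_of_mem (t + 1) (by rw [Finset.mem_Icc]; omega)]
    · simp
    · intro s hs hne
      rw [Finset.mem_Icc] at hs
      rw [Nat.choose_eq_zero_of_lt (show s - 1 < t by omega)]
      simp
  | succ d hd ih =>
    rw [Icc_sum_eq_range]
    simp only [Nat.add_sub_cancel]
    have split : ∀ j : ℕ, (-1 : ℚ) ^ (j + 1) * ((d + 1).choose (j + 1) : ℚ) * (j.choose t : ℚ)
        = -((-1 : ℚ) ^ j * (d.choose j : ℚ) * (j.choose t : ℚ))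
          + (-1 : ℚ) ^ (j + 1) * (d.choose (j + 1) : ℚ) * (j.choose t : ℚ) := by
      intro j
      rw [Nat.choose_succ_succ]
      push_cast; ring
    calc ∑ j ∈ range (d + 1), (-1 : ℚ) ^ (j + 1) * ((d + 1).choose (j + 1) : ℚ) * (j.choose t : ℚ)
        = ∑ j ∈ range (d + 1), (-((-1 : ℚ) ^ j * (d.choose j : ℚ) * (j.choose t : ℚ)))
          + ∑ j ∈ range (d + 1), (-1 : ℚ) ^ (j + 1) * (d.choose (j + 1) : ℚ) * (j.choose t : ℚ) := by
          rw [← Finset.sum_add_distrib]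
          exact Finset.sum_congr rfl fun j _ => by rw [split j]
      _ = (-1 : ℚ) ^ (t + 1) := by
          rw [Finset.sum_neg_distrib, alt_choose_sum d t (by omega), neg_zero, zero_add]
          rw [Finset.sum_range_succ, Nat.choose_succ_self]
          rw [← ih]
          rw [Icc_sum_eq_range]
          simp only [Nat.add_sub_cancel, Nat.cast_zero, mul_zero, zero_mul, add_zero]

lemma sum_piFinset_cons {n : ℕ} (A : Finset ℕ) (G : (Fin (n + 1) → ℕ) → ℚ) :
    ∑ f ∈ Fintype.piFinset (fun _ : Fin (n + 1) => A), G f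
      = ∑ x ∈ A, ∑ t ∈ Fintype.piFinset (fun _ : Fin n => A), G (Fin.cons x t) := by
  rw [← Finset.sum_product']
  apply Finset.sum_nbij' (i := fun f => ((f 0 : ℕ), Fin.tail f))
    (j := fun p => Fin.cons p.1 p.2)
  · intro f hf
    rw [Fintype.mem_piFinset] at hf
    rw [Finset.mem_product]
    exact ⟨hf 0, by rw [Fintype.mem_piFinset]; intro u; exact hf u.succ⟩
  · intro p hp
    rw [Finset.mem_product] at hp
    rw [Fintype.mem_piFinset]
    intro u
    refine Fin.cases ?_ ?_ u
    · simpa using hp.1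
    · intro v
      simpa using (Fintype.mem_piFinset.1 hp.2) v
  · intro f _
    exact Fin.cons_self_tail f
  · intro p _
    simp
  · intro f _
    rw [Fin.cons_self_tail]

lemma fiber_vandermonde (d w p q : ℕ) (hw2 : 2 ≤ w) (hwd : w ≤ d) :
    ∑ xy ∈ (Icc 1 d ×ˢ Icc 1 d).filter (fun xy => xy.1 + xy.2 = w),
        (((xy.1 - 1).choose p : ℚ) * ((xy.2 - 1).choose q : ℚ))
      = ((w - 1).choose (p + q + 1) : ℚ) := by
  have key : ∑ xy ∈ (Icc 1 d ×ˢ Icc 1 d).filter (fun xy => xy.1 + xy.2 = w),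
      ((xy.1 - 1).choose p) * ((xy.2 - 1).choose q)
      = ∑ jk ∈ Finset.HasAntidiagonal.antidiagonal (w - 2), (jk.1.choose p) * (jk.2.choose q) := by
    apply Finset.sum_nbij' (i := fun xy => (xy.1 - 1, xy.2 - 1))
      (j := fun jk => (jk.1 + 1, jk.2 + 1))
    · intro xy hxy
      rw [Finset.mem_filter, Finset.mem_product, Finset.mem_Icc, Finset.mem_Icc] at hxy
      rw [Finset.HasAntidiagonal.mem_antidiagonal]
      omega
    · intro jk hjk
      rw [Finset.HasAntidiagonal.mem_antidiagonal] at hjk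
      rw [Finset.mem_filter, Finset.mem_product, Finset.mem_Icc, Finset.mem_Icc]
      omega
    · intro xy hxy
      rw [Finset.mem_filter, Finset.mem_product, Finset.mem_Icc, Finset.mem_Icc] at hxy
      have : xy.1 - 1 + 1 = xy.1 := by omega
      have h2 : xy.2 - 1 + 1 = xy.2 := by omega
      exact Prod.ext this h2
    · intro jk _
      simp
    · intro xy _
      rfl
  calc ∑ xy ∈ (Icc 1 d ×ˢ Icc 1 d).filter (fun xy => xy.1 + xy.2 = w),
        (((xy.1 - 1).choose p : ℚ) * ((xy.2 - 1).choose q : ℚ))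
      = ((∑ xy ∈ (Icc 1 d ×ˢ Icc 1 d).filter (fun xy => xy.1 + xy.2 = w),
          ((xy.1 - 1).choose p) * ((xy.2 - 1).choose q) : ℕ) : ℚ) := by
        push_cast
        rfl
    _ = ((∑ jk ∈ Finset.HasAntidiagonal.antidiagonal (w - 2), (jk.1.choose p) * (jk.2.choose q) : ℕ) : ℚ) := by
        rw [key]
    _ = (((w - 2 + 1).choose (p + q + 1) : ℕ) : ℚ) := by
        rw [dual_vandermonde (w - 2) p q]
    _ = ((w - 1).choose (p + q + 1) : ℚ) := by
        congr 2
        omega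

lemma pair (d : ℕ) (F : ℕ → ℚ) (hF : ∀ s, d < s → F s = 0) (p q : ℕ) :
    ∑ x ∈ Icc 1 d, ∑ y ∈ Icc 1 d,
        F (x + y) * (((x - 1).choose p : ℚ) * ((y - 1).choose q : ℚ))
      = ∑ w ∈ Icc 1 d, F w * ((w - 1).choose (p + q + 1) : ℚ) := by
  rw [← Finset.sum_product']
  rw [← Finset.sum_fiberwise_of_maps_to (g := fun xy => xy.1 + xy.2) (t := Icc 2 (2 * d))
    (fun xy hxy => by
      rw [Finset.mem_product, Finset.mem_Icc, Finset.mem_Icc] at hxy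
      rw [Finset.mem_Icc]
      omega)]
  have step : ∀ w ∈ Icc 2 (2 * d),
      ∑ xy ∈ (Icc 1 d ×ˢ Icc 1 d).filter (fun xy => xy.1 + xy.2 = w),
          F (xy.1 + xy.2) * (((xy.1 - 1).choose p : ℚ) * ((xy.2 - 1).choose q : ℚ))
        = F w * ((w - 1).choose (p + q + 1) : ℚ) := by
    intro w hw
    rw [Finset.mem_Icc] at hw
    have congr1 : ∑ xy ∈ (Icc 1 d ×ˢ Icc 1 d).filter (fun xy => xy.1 + xy.2 = w),
          F (xy.1 + xy.2) * (((xy.1 - 1).choose p : ℚ) * ((xy.2 - 1).choose q : ℚ))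
        = ∑ xy ∈ (Icc 1 d ×ˢ Icc 1 d).filter (fun xy => xy.1 + xy.2 = w),
          F w * (((xy.1 - 1).choose p : ℚ) * ((xy.2 - 1).choose q : ℚ)) := by
      apply Finset.sum_congr rfl
      intro xy hxy
      rw [Finset.mem_filter] at hxy
      rw [hxy.2]
    rw [congr1, ← Finset.mul_sum]
    by_cases hwd : w ≤ d
    · rw [fiber_vandermonde d w p q hw.1 hwd]
    · rw [hF w (by omega)]
      ring
  rw [Finset.sum_congr rfl step]
  have sub1 : ∑ w ∈ Icc 2 (2 * d), F w * ((w - 1).choose (p + q + 1) : ℚ)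
      = ∑ w ∈ Icc 1 (2 * d), F w * ((w - 1).choose (p + q + 1) : ℚ) := by
    apply Finset.sum_subset
    · intro w hw
      rw [Finset.mem_Icc] at hw ⊢
      omega
    · intro w hw hw2
      rw [Finset.mem_Icc] at hw hw2
      have : w = 1 ∨ d = 0 := by omega
      rcases this with h1 | h1
      · subst h1
        rw [Nat.choose_eq_zero_of_lt (show 1 - 1 < p + q + 1 by omega)]
        simp
      · rw [hF w (by omega)]
        ring
  have sub2 : ∑ w ∈ Icc 1 d, F w * ((w - 1).choose (p + q + 1) : ℚ)
      = ∑ w ∈ Icc 1 (2 * d), F w * ((w - 1).choose (p + q + 1) : ℚ) := by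
    apply Finset.sum_subset
    · intro w hw
      rw [Finset.mem_Icc] at hw ⊢
      omega
    · intro w hw hw2
      rw [Finset.mem_Icc] at hw hw2
      rw [hF w (by omega)]
      ring
  rw [sub1, ← sub2]

lemma main : ∀ (n d : ℕ) (m : Fin (n + 1) → ℕ) (F : ℕ → ℚ), (∀ s, d < s → F s = 0) →
    ∑ i ∈ Fintype.piFinset (fun _ : Fin (n + 1) => Icc 1 d),
      F (∑ u, i u) * ∏ u, ((i u - 1).choose (m u) : ℚ)
    = ∑ s ∈ Icc 1 d, F s * ((s - 1).choose (∑ u, m u + n) : ℚ) := by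
  intro n
  induction n with
  | zero =>
    intro d m F hF
    apply Finset.sum_nbij' (i := fun f => (f 0 : ℕ)) (j := fun x => fun _ => x)
    · intro f hf
      exact (Fintype.mem_piFinset.1 hf) 0
    · intro x hx
      rw [Fintype.mem_piFinset]
      intro _
      exact hx
    · intro f _
      funext u
      rw [Fin.eq_zero u]
    · intro x _
      rfl
    · intro f _
      simp [Fin.sum_univ_one, Fin.prod_univ_one]
  | succ n ih =>
    intro d m F hF
    rw [sum_piFinset_cons (Icc 1 d)
      (fun f => F (∑ u, f u) * ∏ u, ((f u - 1).choose (m u) : ℚ))]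
    have inner : ∀ x ∈ Icc 1 d,
        (∑ t ∈ Fintype.piFinset (fun _ : Fin (n + 1) => Icc 1 d),
          F (∑ u : Fin (n + 1 + 1), Fin.cons (α := fun _ => ℕ) x t u) * ∏ u : Fin (n + 1 + 1), ((Fin.cons (α := fun _ => ℕ) x t u - 1).choose (m u) : ℚ))
        = ∑ s ∈ Icc 1 d, F (x + s)
            * (((x - 1).choose (m 0) : ℚ)
              * ((s - 1).choose (∑ u, Fin.tail m u + n) : ℚ)) := by
      intro x hx
      calc ∑ t ∈ Fintype.piFinset (fun _ : Fin (n + 1) => Icc 1 d),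
            F (∑ u : Fin (n + 1 + 1), Fin.cons (α := fun _ => ℕ) x t u) * ∏ u : Fin (n + 1 + 1), ((Fin.cons (α := fun _ => ℕ) x t u - 1).choose (m u) : ℚ)
          = ∑ t ∈ Fintype.piFinset (fun _ : Fin (n + 1) => Icc 1 d),
            ((x - 1).choose (m 0) : ℚ)
              * ((fun s => F (x + s)) (∑ u, t u)
                * ∏ u, ((t u - 1).choose (Fin.tail m u) : ℚ)) := by
            refine Finset.sum_congr rfl fun t _ => ?_
            rw [Fin.sum_univ_succ (Fin.cons (α := fun _ => ℕ) x t), Fin.prod_univ_succ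
              (fun u => ((Fin.cons (α := fun _ => ℕ) x t u - 1).choose (m u) : ℚ))]
            simp only [Fin.cons_zero, Fin.cons_succ, Fin.tail]
            ring
        _ = ((x - 1).choose (m 0) : ℚ)
            * ∑ t ∈ Fintype.piFinset (fun _ : Fin (n + 1) => Icc 1 d),
              ((fun s => F (x + s)) (∑ u, t u)
                * ∏ u, ((t u - 1).choose (Fin.tail m u) : ℚ)) := by
            rw [Finset.mul_sum]
        _ = ((x - 1).choose (m 0) : ℚ)
            * ∑ s ∈ Icc 1 d, (fun s => F (x + s)) s
              * ((s - 1).choose (∑ u, Fin.tail m u + n) : ℚ) := by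
            rw [ih d (Fin.tail m) (fun s => F (x + s)) (fun s hs => hF (x + s) (by omega))]
        _ = ∑ s ∈ Icc 1 d, F (x + s)
            * (((x - 1).choose (m 0) : ℚ)
              * ((s - 1).choose (∑ u, Fin.tail m u + n) : ℚ)) := by
            rw [Finset.mul_sum]
            exact Finset.sum_congr rfl fun s _ => by ring
    calc ∑ x ∈ Icc 1 d, ∑ t ∈ Fintype.piFinset (fun _ : Fin (n + 1) => Icc 1 d),
          F (∑ u : Fin (n + 1 + 1), Fin.cons (α := fun _ => ℕ) x t u) * ∏ u : Fin (n + 1 + 1), ((Fin.cons (α := fun _ => ℕ) x t u - 1).choose (m u) : ℚ)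
        = ∑ x ∈ Icc 1 d, ∑ s ∈ Icc 1 d, F (x + s)
            * (((x - 1).choose (m 0) : ℚ)
              * ((s - 1).choose (∑ u, Fin.tail m u + n) : ℚ)) :=
          Finset.sum_congr rfl inner
      _ = ∑ w ∈ Icc 1 d, F w * ((w - 1).choose (m 0 + (∑ u, Fin.tail m u + n) + 1) : ℚ) :=
          pair d F hF (m 0) (∑ u, Fin.tail m u + n)
      _ = ∑ s ∈ Icc 1 d, F s * ((s - 1).choose (∑ u, m u + (n + 1)) : ℚ) := by
          have hidx : m 0 + (∑ u, Fin.tail m u + n) + 1 = ∑ u, m u + (n + 1) := by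
            rw [Fin.sum_univ_succ m]
            simp only [Fin.tail]
            omega
          rw [hidx]

lemma pow_expand (d x av : ℕ) (hx : x ∈ Icc 1 d) :
    ((x : ℚ)) ^ av = ∑ mm ∈ range (d + 1), ((x - 1).choose mm : ℚ) * e av mm := by
  rw [Finset.mem_Icc] at hx
  have h1 : x - 1 + 1 = x := by omega
  have h2 := newton_pow av (x - 1)
  rw [h1] at h2
  rw [h2]
  apply Finset.sum_subset
  · intro mm hmm
    rw [Finset.mem_range] at hmm ⊢
    omega
  · intro mm hmm hmm2
    rw [Finset.mem_range] at hmm hmm2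
    rw [Nat.choose_eq_zero_of_lt (show x - 1 < mm by omega)]
    simp

end Stmt3Aux

open Stmt3Aux in
/-- If `a₁ + ⋯ + a_r = d - r + 1` (with `d ≥ r`) then
`β(d,a₁,…,a_r) = ∑_{i₁=1}^{d} ⋯ ∑_{i_r=1}^{d} (-1)^{∑ i_u} C(d, ∑ i_u) ∏ i_u^{a_u}
  = (-1)^d a₁! ⋯ a_r!`. -/
theorem stmt3 (d r : ℕ) (hd : 0 < r) (hrd : r ≤ d) (a : Fin r → ℕ)
    (h : ((∑ u, a u : ℕ) : ℤ) = (d : ℤ) - r + 1) :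
    ∑ i ∈ Fintype.piFinset (fun _ : Fin r => Finset.Icc 1 d),
      (-1 : ℚ) ^ (∑ u, i u) * (d.choose (∑ u, i u) : ℚ) * ∏ u, (i u : ℚ) ^ (a u) =
      (-1 : ℚ) ^ d * ∏ u, ((a u).factorial : ℚ) := by
  obtain ⟨n, rfl⟩ : ∃ n, r = n + 1 := ⟨r - 1, by omega⟩
  have hnd : n + 1 ≤ d := hrd
  have hA : ∑ u, a u = d - n := by omega
  set F : ℕ → ℚ := fun s => (-1 : ℚ) ^ s * (d.choose s : ℚ) with hFdef
  have hF : ∀ s, d < s → F s = 0 := by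
    intro s hs
    simp [hFdef, Nat.choose_eq_zero_of_lt hs]
  set PI := Fintype.piFinset (fun _ : Fin (n + 1) => Finset.Icc 1 d) with hPI
  set PM := Fintype.piFinset (fun _ : Fin (n + 1) => Finset.range (d + 1)) with hPM
  have haPM : a ∈ PM := by
    rw [hPM, Fintype.mem_piFinset]
    intro u
    rw [Finset.mem_range]
    have h1 : a u ≤ ∑ v, a v := Finset.single_le_sum (fun v _ => Nat.zero_le (a v)) (mem_univ u)
    rw [hA] at h1
    omega
  have hau_le : ∀ u, a u ≤ d := by
    intro u
    have h1 : a u ≤ ∑ v, a v := Finset.single_le_sum (fun v _ => Nat.zero_le (a v)) (mem_univ u)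
    rw [hA] at h1
    omega
  have hW_zero : ∀ M : ℕ, d ≤ M + n →
      ∑ s ∈ Icc 1 d, F s * ((s - 1).choose (M + n) : ℚ) = 0 := by
    intro M hM
    have hT := T_zero d (M + n) hM
    rw [← hT]
  have hW_lt : ∀ M : ℕ, M + n < d →
      ∑ s ∈ Icc 1 d, F s * ((s - 1).choose (M + n) : ℚ) = (-1 : ℚ) ^ (M + n + 1) := by
    intro M hM
    have hT := T_eq d (M + n) hM
    rw [← hT]
  have hother : ∀ m ∈ PM, m ≠ a → (∏ u, e (a u) (m u))
      * ((-1 : ℚ) ^ (∑ u, m u + n + 1)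
        - ∑ s ∈ Icc 1 d, F s * ((s - 1).choose (∑ u, m u + n) : ℚ)) = 0 := by
    intro m _ hne
    by_cases hle : ∀ u, m u ≤ a u
    · have hlt : ∑ u, m u < ∑ u, a u := by
        obtain ⟨u0, hu0⟩ : ∃ u, m u ≠ a u := by
          by_contra hc
          push_neg at hc
          exact hne (funext hc)
        exact Finset.sum_lt_sum (fun u _ => hle u)
          ⟨u0, Finset.mem_univ u0, lt_of_le_of_ne (hle u0) hu0⟩
      rw [hW_lt (∑ u, m u) (by omega), sub_self, mul_zero]
    · push_neg at hle
      obtain ⟨u0, hu0⟩ := hle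
      rw [Finset.prod_eq_zero (Finset.mem_univ u0) (e_zero (a u0) (m u0) hu0), zero_mul]
  have hsecond : ∑ m ∈ PM, (∏ u, e (a u) (m u))
      * ((-1 : ℚ) ^ (∑ u, m u + n + 1)
        - ∑ s ∈ Icc 1 d, F s * ((s - 1).choose (∑ u, m u + n) : ℚ))
      = (-1 : ℚ) ^ (d + 1) * ∏ u, ((a u).factorial : ℚ) := by
    rw [Finset.sum_eq_single_of_mem a haPM hother]
    rw [hW_zero (∑ u, a u) (by omega), sub_zero,
      show ∑ u, a u + n + 1 = d + 1 by omega,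
      show (∏ u, e (a u) (a u)) = ∏ u, ((a u).factorial : ℚ) from
        Finset.prod_congr rfl fun u _ => e_self (a u)]
    ring
  have hfirst : ∑ m ∈ PM, (∏ u, e (a u) (m u)) * (-1 : ℚ) ^ (∑ u, m u + n + 1) = 0 := by
    have hterm : ∀ m ∈ PM, (∏ u, e (a u) (m u)) * (-1 : ℚ) ^ (∑ u, m u + n + 1)
        = (-1 : ℚ) ^ (n + 1) * ∏ u, (e (a u) (m u) * (-1 : ℚ) ^ (m u)) := by
      intro m _
      rw [show ∑ u, m u + n + 1 = (∑ u, m u) + (n + 1) by omega, pow_add,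
        ← Finset.prod_pow_eq_pow_sum, Finset.prod_mul_distrib]
      ring
    have hp := Finset.prod_univ_sum (t := fun _ : Fin (n + 1) => Finset.range (d + 1))
      (f := fun u mm => e (a u) mm * (-1 : ℚ) ^ mm)
    rw [Finset.sum_congr rfl hterm, ← Finset.mul_sum, hPM, ← hp]
    obtain ⟨u0, hu0⟩ : ∃ u, a u ≠ 0 := by
      by_contra hc
      push_neg at hc
      have : ∑ u, a u = 0 := Finset.sum_eq_zero fun u _ => hc u
      omega
    have hfac : ∑ mm ∈ range (d + 1), e (a u0) mm * (-1 : ℚ) ^ mm = 0 := by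
      have halt := alt_e_sum (a u0) d (hau_le u0)
      rw [if_neg hu0] at halt
      rw [← halt]
      exact Finset.sum_congr rfl fun mm _ => by ring
    rw [Finset.prod_eq_zero (Finset.mem_univ u0) hfac, mul_zero]
  calc ∑ i ∈ PI, (-1 : ℚ) ^ (∑ u, i u) * (d.choose (∑ u, i u) : ℚ) * ∏ u, (i u : ℚ) ^ (a u)
      = ∑ i ∈ PI, ∑ m ∈ PM,
          (∏ u, e (a u) (m u)) * (F (∑ u, i u) * ∏ u, ((i u - 1).choose (m u) : ℚ)) := by
        refine Finset.sum_congr rfl fun i hi => ?_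
        have hiu : ∀ u, i u ∈ Icc 1 d := by
          rw [hPI, Fintype.mem_piFinset] at hi
          exact hi
        have hprod : ∏ u, (i u : ℚ) ^ (a u)
            = ∑ m ∈ PM, ∏ u, (((i u - 1).choose (m u) : ℚ) * e (a u) (m u)) := by
          have hp := Finset.prod_univ_sum (t := fun _ : Fin (n + 1) => Finset.range (d + 1))
            (f := fun u mm => ((i u - 1).choose mm : ℚ) * e (a u) mm)
          rw [hPM, ← hp]
          exact Finset.prod_congr rfl fun u _ => pow_expand d (i u) (a u) (hiu u)
        rw [hprod, Finset.mul_sum]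
        refine Finset.sum_congr rfl fun m _ => ?_
        rw [Finset.prod_mul_distrib, hFdef]
        ring
    _ = ∑ m ∈ PM, ∑ i ∈ PI,
          (∏ u, e (a u) (m u)) * (F (∑ u, i u) * ∏ u, ((i u - 1).choose (m u) : ℚ)) :=
        Finset.sum_comm
    _ = ∑ m ∈ PM, (∏ u, e (a u) (m u))
          * ∑ s ∈ Icc 1 d, F s * ((s - 1).choose (∑ u, m u + n) : ℚ) := by
        refine Finset.sum_congr rfl fun m _ => ?_
        rw [← Finset.mul_sum, hPI, main n d m F hF]
    _ = ∑ m ∈ PM, (∏ u, e (a u) (m u)) * (-1 : ℚ) ^ (∑ u, m u + n + 1)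
        - ∑ m ∈ PM, (∏ u, e (a u) (m u))
          * ((-1 : ℚ) ^ (∑ u, m u + n + 1)
            - ∑ s ∈ Icc 1 d, F s * ((s - 1).choose (∑ u, m u + n) : ℚ)) := by
        rw [← Finset.sum_sub_distrib]
        exact Finset.sum_congr rfl fun m _ => by ring
    _ = 0 - (-1 : ℚ) ^ (d + 1) * ∏ u, ((a u).factorial : ℚ) := by
        rw [hfirst, hsecond]
    _ = (-1 : ℚ) ^ d * ∏ u, ((a u).factorial : ℚ) := by
        rw [pow_succ]
        ring
end

section
/- For nonnegative integers a₁,…,a_n, the sum ∑ over tuples (i₁,…,i_n) of nonnegative integers with i₁+⋯+i_n ≤ s of the product i₁^{a₁}⋯i_n^{a_n} is a polynomial in s of degree a₁+⋯+a_n+n, with leading coefficient (a₁!⋯a_n!)/((n + a₁+⋯+a_n)!). -/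
/-!
Expanding each power in the binomial basis, `x ^ a = ∑ₖ S(a, k) k! (x choose k)` with Stirling
numbers of the second kind, reduces the sum to sums of products of binomial coefficients. These
are given by the multidimensional hockey-stick identity
`∑_{i₁+⋯+iₙ ≤ s} ∏ᵤ (iᵤ choose kᵤ) = (s + n choose k₁+⋯+kₙ + n)`, proved by peeling off one
coordinate at a time with the upper Vandermonde convolution. Hence the sum is a combination of the
polynomials `s ↦ (s + n choose |k| + n)` over `k ≤ a`, whose unique term of top degree is `k = a`,
with coefficient `∏ᵤ aᵤ!` and leading coefficient `1 / (|a| + n)!`.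
-/

open Finset Polynomial

theorem Nat.mul_descFactorial (x k : ℕ) :
    x * x.descFactorial k = x.descFactorial (k + 1) + k * x.descFactorial k := by
  rw [Nat.descFactorial_succ]
  rcases le_or_gt k x with h | h
  · rw [← add_mul, Nat.sub_add_cancel h]
  · simp [Nat.descFactorial_eq_zero_iff_lt.2 h]

theorem Nat.pow_eq_sum_stirlingSecond_mul_descFactorial (x m : ℕ) :
    x ^ m = ∑ k ∈ range (m + 1), m.stirlingSecond k * x.descFactorial k := by
  induction m with
  | zero => simp
  | succ m ih =>
    set g : ℕ → ℕ := fun k => k * m.stirlingSecond k * x.descFactorial k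
    have shift : ∑ k ∈ range (m + 1), g (k + 1) = ∑ k ∈ range (m + 1), g k :=
      calc ∑ k ∈ range (m + 1), g (k + 1) = ∑ k ∈ range (m + 1 + 1), g k := by
            simp [sum_range_succ' g (m + 1), g]
        _ = ∑ k ∈ range (m + 1), g k := by
            simp [sum_range_succ g (m + 1), g, Nat.stirlingSecond_eq_zero_of_lt]
    calc x ^ (m + 1) = ∑ k ∈ range (m + 1), m.stirlingSecond k * (x * x.descFactorial k) := by
          rw [pow_succ', ih, mul_sum]; ring_nf
      _ = ∑ k ∈ range (m + 1), m.stirlingSecond k * x.descFactorial (k + 1) +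
            ∑ k ∈ range (m + 1), g (k + 1) := by
          rw [shift, ← sum_add_distrib]
          refine sum_congr rfl fun k _ => ?_
          simp only [g, Nat.mul_descFactorial]; ring
      _ = ∑ k ∈ range (m + 1 + 1), (m + 1).stirlingSecond k * x.descFactorial k := by
          rw [sum_range_succ' _ (m + 1), ← sum_add_distrib]
          simp only [Nat.stirlingSecond_succ_succ, Nat.stirlingSecond_succ_zero, g]
          rw [zero_mul, add_zero]
          refine sum_congr rfl fun k _ => ?_
          ring

theorem Finset.Nat.sum_antidiagonal_choose_mul_choose_add (p q n m : ℕ) :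
    ∑ ij ∈ antidiagonal m, ij.1.choose p * (ij.2 + n).choose (q + n) =
      (m + n + 1).choose (p + q + n + 1) := by
  induction m generalizing p with
  | zero =>
    simp only [antidiagonal_zero, sum_singleton, zero_add]
    rcases Nat.eq_zero_or_pos (p + q) with hpq | hpq
    · obtain ⟨rfl, rfl⟩ : p = 0 ∧ q = 0 := by omega
      simp
    · rw [Nat.choose_eq_zero_of_lt (show n + 1 < p + q + n + 1 by omega)]
      rcases Nat.eq_zero_or_pos p with rfl | hp
      · rw [Nat.choose_eq_zero_of_lt (show n < q + n by omega), mul_zero]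
      · rw [Nat.choose_eq_zero_of_lt hp, zero_mul]
  | succ m ih =>
    rw [Finset.Nat.sum_antidiagonal_succ, show m + 1 + n + 1 = m + n + 1 + 1 by ring]
    rcases p with _ | p
    · have ih0 := ih 0
      simp only [Nat.choose_zero_right, one_mul, zero_add] at ih0 ⊢
      rw [ih0, Nat.choose_succ_succ' (m + n + 1), show m + 1 + n = m + n + 1 by ring, add_comm]
    · simp only [Nat.choose_zero_succ, zero_mul, zero_add, Nat.choose_succ_succ' _ p, add_mul,
        sum_add_distrib, ih]
      rw [show p + 1 + q + n + 1 = p + q + n + 1 + 1 by ring, Nat.choose_succ_succ' (m + n + 1)]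

def tuplesSumLe (n s : ℕ) : Finset (Fin n → ℕ) :=
  (Fintype.piFinset fun _ => range (s + 1)).filter fun i => ∑ u, i u ≤ s

theorem mem_tuplesSumLe {n s : ℕ} {i : Fin n → ℕ} : i ∈ tuplesSumLe n s ↔ ∑ u, i u ≤ s := by
  simp only [tuplesSumLe, mem_filter, Fintype.mem_piFinset, mem_range, and_iff_right_iff_imp]
  intro h u
  have := single_le_sum (fun v _ => Nat.zero_le (i v)) (mem_univ u)
  omega

theorem tuplesSumLe_zero (s : ℕ) : tuplesSumLe 0 s = {Fin.elim0} := by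
  ext i
  simp [mem_tuplesSumLe, Subsingleton.elim i Fin.elim0]

theorem sum_tuplesSumLe_succ {M : Type*} [AddCommMonoid M] (n s : ℕ)
    (g : (Fin (n + 1) → ℕ) → M) :
    ∑ i ∈ tuplesSumLe (n + 1) s, g i =
      ∑ jr ∈ antidiagonal s, ∑ t ∈ tuplesSumLe n jr.2, g (Fin.cons jr.1 t) := by
  rw [sum_sigma']
  refine sum_nbij' (fun i => ⟨(i 0, s - i 0), Fin.tail i⟩) (fun x => Fin.cons x.1.1 x.2)
    ?_ ?_ ?_ ?_ ?_
  · intro i hi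
    simp only [mem_tuplesSumLe, Fin.sum_univ_succ] at hi
    simp only [mem_sigma, HasAntidiagonal.mem_antidiagonal, mem_tuplesSumLe, Fin.tail]
    omega
  · rintro ⟨⟨j, r⟩, t⟩ hx
    simp only [mem_sigma, HasAntidiagonal.mem_antidiagonal, mem_tuplesSumLe] at hx
    simp only [mem_tuplesSumLe, Fin.sum_univ_succ, Fin.cons_zero, Fin.cons_succ]
    omega
  · intro i _
    exact Fin.cons_self_tail i
  · rintro ⟨⟨j, r⟩, t⟩ hx
    simp only [mem_sigma, HasAntidiagonal.mem_antidiagonal] at hx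
    simp [← hx.1]
  · intro i _
    rw [Fin.cons_self_tail]

theorem sum_tuplesSumLe_prod_choose (n s : ℕ) (k : Fin n → ℕ) :
    ∑ i ∈ tuplesSumLe n s, ∏ u, (i u).choose (k u) = (s + n).choose (∑ u, k u + n) := by
  induction n generalizing s with
  | zero => simp [tuplesSumLe_zero]
  | succ n ih =>
    simp only [sum_tuplesSumLe_succ, Fin.prod_univ_succ, Fin.cons_zero, Fin.cons_succ,
      ← mul_sum, ih, Fin.sum_univ_succ]
    rw [Finset.Nat.sum_antidiagonal_choose_mul_choose_add]
    congr 1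


theorem sum_tuplesSumLe_prod_pow (n s : ℕ) (a : Fin n → ℕ) :
    ∑ i ∈ tuplesSumLe n s, ∏ u, i u ^ a u =
      ∑ k ∈ Fintype.piFinset (fun u => range (a u + 1)),
        (∏ u, (a u).stirlingSecond (k u) * (k u).factorial) * (s + n).choose (∑ u, k u + n) := by
  have hpow (x m : ℕ) :
      x ^ m = ∑ k ∈ range (m + 1), m.stirlingSecond k * k.factorial * x.choose k := by
    simp only [Nat.pow_eq_sum_stirlingSecond_mul_descFactorial,
      Nat.descFactorial_eq_factorial_mul_choose, mul_assoc]
  simp only [hpow, prod_univ_sum, prod_mul_distrib]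
  rw [sum_comm]
  simp only [← mul_sum, sum_tuplesSumLe_prod_choose]
section addChoosePoly

variable (K : Type*) [Field K]

noncomputable def addChoosePoly (n m : ℕ) : K[X] :=
  C (m.factorial : K)⁻¹ * (descPochhammer K m).comp (X + C (n : K))

theorem eval_natCast_addChoosePoly [CharZero K] (n m s : ℕ) :
    (addChoosePoly K n m).eval (s : K) = ((s + n).choose m : K) := by
  rw [addChoosePoly, eval_mul, eval_C, eval_comp, eval_add, eval_X, eval_C,
    Nat.cast_choose_eq_descPochhammer_div, Nat.cast_add, inv_mul_eq_div]

theorem degree_addChoosePoly [CharZero K] (n m : ℕ) : (addChoosePoly K n m).degree = m := by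
  have hmonic := (monic_descPochhammer K m).comp_X_add_C (n : K)
  rw [addChoosePoly, degree_C_mul (inv_ne_zero (Nat.cast_ne_zero.2 m.factorial_ne_zero)), degree_eq_natDegree hmonic.ne_zero,
    natDegree_comp, descPochhammer_natDegree, natDegree_X_add_C, mul_one]

theorem leadingCoeff_addChoosePoly (n m : ℕ) :
    (addChoosePoly K n m).leadingCoeff = (m.factorial : K)⁻¹ := by
  rw [addChoosePoly, leadingCoeff_mul, leadingCoeff_C,
    ((monic_descPochhammer K m).comp_X_add_C (n : K)).leadingCoeff, mul_one]

end addChoosePoly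

theorem Polynomial.degree_sum_eq_and_leadingCoeff_sum_eq {ι R : Type*} [Semiring R]
    {s : Finset ι} {f : ι → R[X]} {i : ι} {d : ℕ} (hi : i ∈ s) (hd : (f i).degree = d)
    (hlt : ∀ j ∈ s, j ≠ i → (f j).degree < d) :
    (∑ j ∈ s, f j).degree = d ∧ (∑ j ∈ s, f j).leadingCoeff = (f i).leadingCoeff := by
  classical
  have hrest : (∑ j ∈ s.erase i, f j).degree < (f i).degree := by
    rw [hd]
    refine (degree_sum_le _ _).trans_lt ((Finset.sup_lt_iff (WithBot.bot_lt_coe d)).2 ?_)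
    intro j hj
    exact hlt j (mem_of_mem_erase hj) (ne_of_mem_erase hj)
  rw [← add_sum_erase s f hi]
  exact ⟨(degree_add_eq_left_of_degree_lt hrest).trans hd, leadingCoeff_add_of_degree_lt' hrest⟩

theorem stmt4_general (n : ℕ) (a : Fin n → ℕ) :
    ∃ P : Polynomial ℚ,
      P.degree = ((∑ u, a u) + n : ℕ) ∧
      P.leadingCoeff = (∏ u, ((a u).factorial : ℚ)) / (((n + ∑ u, a u).factorial : ℚ)) ∧
      ∀ s : ℕ,
        P.eval (s : ℚ) =
          ∑ i ∈ (Fintype.piFinset (fun _ : Fin n => Finset.range (s + 1))).filter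
              (fun i => ∑ u, i u ≤ s),
            ∏ u, (i u : ℚ) ^ (a u) := by
  set w : (Fin n → ℕ) → ℕ := fun k => ∏ u, (a u).stirlingSecond (k u) * (k u).factorial
  set f : (Fin n → ℕ) → ℚ[X] := fun k => (w k : ℚ) • addChoosePoly ℚ n (∑ u, k u + n)
  have hfa : f a = C (∏ u, ((a u).factorial : ℚ)) * addChoosePoly ℚ n (∑ u, a u + n) := by
    simp [f, w, Nat.stirlingSecond_self, smul_eq_C_mul]
  have hmem : a ∈ Fintype.piFinset (fun u => range (a u + 1)) := by simp
  have htop : (f a).degree = (∑ u, a u + n : ℕ) := by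
    rw [hfa, degree_C_mul (prod_pos fun u _ => by positivity).ne', degree_addChoosePoly]
  have hlower : ∀ k ∈ Fintype.piFinset (fun u => range (a u + 1)), k ≠ a →
      (f k).degree < (∑ u, a u + n : ℕ) := by
    intro k hk hka
    have hle : k ≤ a := fun u => Nat.lt_succ_iff.1 (mem_range.1 (Fintype.mem_piFinset.1 hk u))
    have hsum : ∑ u, k u < ∑ u, a u := Fintype.sum_strictMono (lt_of_le_of_ne hle hka)
    refine (degree_smul_le _ _).trans_lt ?_
    rw [degree_addChoosePoly]
    exact_mod_cast (by omega : ∑ u, k u + n < ∑ u, a u + n)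
  obtain ⟨hdeg, hlc⟩ := degree_sum_eq_and_leadingCoeff_sum_eq hmem htop hlower
  refine ⟨∑ k ∈ Fintype.piFinset (fun u => range (a u + 1)), f k, hdeg, ?_, fun s => ?_⟩
  · rw [hlc, hfa, leadingCoeff_mul, leadingCoeff_C, leadingCoeff_addChoosePoly, add_comm n,
      div_eq_mul_inv]
  · simp only [f, eval_finsetSum, eval_smul, eval_natCast_addChoosePoly, smul_eq_mul]
    rw [← tuplesSumLe]
    exact_mod_cast (sum_tuplesSumLe_prod_pow n s a).symm

/-- The sum `∑_{i₁+⋯+i_n ≤ s} i₁^{a₁} ⋯ i_n^{a_n}` is a polynomial in `s` of degree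
`a₁+⋯+a_n+n` with leading coefficient `(a₁!⋯a_n!)/((n+a₁+⋯+a_n)!)`. -/
theorem stmt4 (n : ℕ) (hn : 1 ≤ n) (a : Fin n → ℕ) :
    ∃ P : Polynomial ℚ,
      P.degree = ((∑ u, a u) + n : ℕ) ∧
      P.leadingCoeff = (∏ u, ((a u).factorial : ℚ)) / (((n + ∑ u, a u).factorial : ℚ)) ∧
      ∀ s : ℕ,
        P.eval (s : ℚ) =
          ∑ i ∈ (Fintype.piFinset (fun _ : Fin n => Finset.range (s + 1))).filter
              (fun i => ∑ u, i u ≤ s),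
            ∏ u, (i u : ℚ) ^ (a u) :=
  stmt4_general n a
end

section
/- For nonnegative integers a₁, …, a_r (r ≥ 1), the sum over all tuples (b, b₁, …, b_{r-1}) of nonnegative integers with b + b₁ + ⋯ + b_{r-1} = a_r of the multinomial coefficient C(a_r; b, b₁, …, b_{r-1}) times (-1)^{b₁+⋯+b_{r-1}} times (∏_{i=1}^{r-1} (a_i + b_i)!) / (a₁+⋯+a_{r-1} + b₁+⋯+b_{r-1} + r - 1)! equals (a₁! ⋯ a_r!) / (a₁ + ⋯ + a_r + r - 1)!. -/
open Finset
lemma sumA (N : ℕ) : ∀ a d : ℕ, ∑ b ∈ range (N+1), (N.choose b : ℚ) * (-1)^b * (a+b).factorial / (a+d+1+b).factorial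
    = (a.factorial * (N+d).factorial) / (d.factorial * (N+a+d+1).factorial) := by
  induction N with
  | zero =>
    intro a d
    have hd : (d.factorial:ℚ) ≠ 0 := by positivity
    simp only [zero_add, Finset.sum_range_one, Nat.choose_self, Nat.add_zero, Nat.cast_one,
      pow_zero, one_mul, mul_one]
    have h2 : (((a+d+1).factorial:ℚ)) ≠ 0 := by positivity
    field_simp
  | succ N ih =>
    intro a d
    rw [Finset.sum_range_succ']
    have h1 : ∀ b ∈ range (N+1), ((N+1).choose (b+1) : ℚ) * (-1)^(b+1) * (a+(b+1)).factorial / (a+d+1+(b+1)).factorial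
        = -((N.choose b : ℚ) * (-1)^b * ((a+1)+b).factorial / ((a+1)+d+1+b).factorial)
          + (N.choose (b+1) : ℚ) * (-1)^(b+1) * (a+(b+1)).factorial / (a+d+1+(b+1)).factorial := by
      intro b _
      rw [Nat.choose_succ_succ]
      push_cast
      have e1 : a + (b+1) = (a+1)+b := by ring
      have e2 : a + d + 1 + (b+1) = (a+1)+d+1+b := by ring
      rw [e1, e2]
      ring
    rw [Finset.sum_congr rfl h1, Finset.sum_add_distrib]
    have h2 : (∑ x ∈ Finset.range (N + 1),
          ((N.choose (x + 1) :ℚ)) * (-1) ^ (x + 1) * ((a + (x + 1)).factorial) / ((a + d + 1 + (x + 1)).factorial)) +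
        (((N + 1).choose 0 : ℚ)) * (-1) ^ 0 * ((a + 0).factorial) / ((a + d + 1 + 0).factorial)
        = (a.factorial * (N+d).factorial) / (d.factorial * (N+a+d+1).factorial) := by
      rw [show (((N+1).choose 0 : ℕ):ℚ) = ((N.choose 0 : ℕ):ℚ) by simp]
      rw [← Finset.sum_range_succ' (fun b => (N.choose b : ℚ) * (-1)^b * ((a+b).factorial) / ((a+d+1+b).factorial)) (N+1)]
      rw [Finset.sum_range_succ]
      simp only [Nat.choose_succ_self, Nat.cast_zero, zero_mul, mul_zero, zero_div, add_zero]
      exact ih a d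
    rw [add_assoc, h2, Finset.sum_neg_distrib, ih (a+1) d]
    have e1 : N + (a+1) + d + 1 = (N+a+d+1)+1 := by ring
    have e2 : N + 1 + d = (N+d)+1 := by ring
    have e3 : N + 1 + a + d + 1 = (N+a+d+1)+1 := by ring
    rw [e1, e2, e3, Nat.factorial_succ ((N+a+d+1)), Nat.factorial_succ (N+d), Nat.factorial_succ a]
    have p1 : (0:ℚ) < d.factorial := by positivity
    have p2 : (0:ℚ) < (N+a+d+1).factorial := by positivity
    push_cast
    field_simp
    ring
lemma split (m ar : ℕ) (F : (Fin (m+1) → ℕ) → ℚ) :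
    ∑ c ∈ (Fintype.piFinset (fun _ : Fin (m+1) => Finset.range (ar+1))).filter
        (fun c => ∑ i, c i ≤ ar), F c
  = ∑ c' ∈ (Fintype.piFinset (fun _ : Fin m => Finset.range (ar+1))).filter
        (fun c => ∑ i, c i ≤ ar),
      ∑ b ∈ Finset.range (ar - ∑ i, c' i + 1), F (Fin.cons b c') := by
  rw [Finset.sum_sigma']
  refine Finset.sum_bij' (i := fun c _ => (⟨fun i => c i.succ, c 0⟩ : Σ _ : Fin m → ℕ, ℕ))
    (j := fun x _ => Fin.cons x.2 x.1) ?_ ?_ ?_ ?_ ?_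
  · intro c hc
    simp only [Finset.mem_filter, Fintype.mem_piFinset, Finset.mem_range,
      Finset.mem_sigma] at hc ⊢
    obtain ⟨h1, h2⟩ := hc
    rw [Fin.sum_univ_succ] at h2
    exact ⟨⟨fun i => h1 i.succ, by omega⟩, by omega⟩
  · intro x hx
    simp only [Finset.mem_sigma, Finset.mem_filter, Fintype.mem_piFinset, Finset.mem_range] at hx ⊢
    obtain ⟨⟨h1, h2⟩, h3⟩ := hx
    constructor
    · intro i
      refine Fin.cases ?_ ?_ i
      · simp only [Fin.cons_zero]; omega
      · intro j; simp only [Fin.cons_succ]; exact h1 j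
    · rw [Fin.sum_univ_succ]
      simp only [Fin.cons_zero, Fin.cons_succ]
      omega
  · intro c _
    exact Fin.cons_self_tail c
  · intro x _
    refine Sigma.ext ?_ ?_
    · funext i; simp
    · simp
  · intro c _
    congr 1
    exact (Fin.cons_self_tail c).symm
lemma inner (ar S' A B mm : ℕ) (P Q : ℚ) (hS : S' ≤ ar) (hP : 0 < P) (hQ : 0 < Q) :
    ∑ b ∈ Finset.range (ar - S' + 1),
      (ar.factorial : ℚ) / (((ar - (b + S')).factorial : ℚ) * ((b.factorial : ℚ) * P)) *
        (-1:ℚ)^(b + S') * (((A + b).factorial : ℚ) * Q) / (((A + B + (b + S') + (mm+1)).factorial : ℚ))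
    = ((A.factorial : ℚ) * (((B + ar + mm).factorial : ℚ)) / (((A + B + ar + (mm+1)).factorial : ℚ)))
      * ((ar.factorial : ℚ) / (((ar - S').factorial : ℚ) * P) * (-1:ℚ)^(S') * Q / (((B + S' + mm).factorial : ℚ))) := by
  have hterm : ∀ b ∈ Finset.range (ar - S' + 1),
      (ar.factorial : ℚ) / (((ar - (b + S')).factorial : ℚ) * ((b.factorial : ℚ) * P)) *
        (-1:ℚ)^(b + S') * (((A + b).factorial : ℚ) * Q) / (((A + B + (b + S') + (mm+1)).factorial : ℚ))
      = ((ar.factorial : ℚ) / (((ar - S').factorial : ℚ) * P) * (-1:ℚ)^(S') * Q) *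
        (((ar - S').choose b : ℚ) * (-1:ℚ)^b * (((A + b).factorial : ℚ)) / (((A + (B + S' + mm) + 1 + b).factorial : ℚ))) := by
    intro b hb
    rw [Finset.mem_range] at hb
    have hb' : b ≤ ar - S' := by omega
    have e1 : ar - (b + S') = ar - S' - b := by omega
    have e2 : A + B + (b + S') + (mm + 1) = A + (B + S' + mm) + 1 + b := by ring
    rw [e1, e2, Nat.cast_choose ℚ hb', pow_add]
    have h1 : (0:ℚ) < (ar - S' - b).factorial := by positivity
    have h2 : (0:ℚ) < (b.factorial : ℚ) := by positivity
    have h3 : (0:ℚ) < ((ar - S').factorial : ℚ) := by positivity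
    have h4 : (0:ℚ) < ((A + (B + S' + mm) + 1 + b).factorial : ℚ) := by positivity
    field_simp
  rw [Finset.sum_congr rfl hterm, ← Finset.mul_sum, sumA (ar - S') A (B + S' + mm)]
  have e3 : ar - S' + (B + S' + mm) = B + ar + mm := by omega
  have e4 : ar - S' + A + (B + S' + mm) + 1 = A + B + ar + (mm + 1) := by omega
  rw [e3, e4]
  have h1 : (0:ℚ) < ((B + S' + mm).factorial : ℚ) := by positivity
  have h2 : (0:ℚ) < ((A + B + ar + (mm+1)).factorial : ℚ) := by positivity
  have h3 : (0:ℚ) < ((ar - S').factorial : ℚ) := by positivity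
  field_simp


/-- Lemma `sum_int`: with `r = m + 1`, `a₁,…,a_{r-1}` given by `a : Fin m → ℕ` and
`a_r = ar`, the sum over tuples `(b, b₁, …, b_{r-1})` with `b + b₁ + ⋯ + b_{r-1} = a_r`
(encoded by `b = ar - ∑ bᵢ` where the `bᵢ` range over tuples with `∑ bᵢ ≤ ar`) of
`C(a_r; b, b₁,…,b_{r-1}) (-1)^{∑ bᵢ} (∏ (aᵢ+bᵢ)!)/(∑aᵢ + ∑bᵢ + r - 1)!` equals
`(a₁!⋯a_r!)/(a₁+⋯+a_r+r-1)!`. -/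
theorem stmt7 (m : ℕ) (a : Fin m → ℕ) (ar : ℕ) :
    ∑ c ∈ (Fintype.piFinset (fun _ : Fin m => Finset.range (ar + 1))).filter
        (fun c => ∑ i, c i ≤ ar),
      ((ar.factorial : ℚ) / (((ar - ∑ i, c i).factorial : ℚ) * ∏ i, ((c i).factorial : ℚ))) *
        (-1 : ℚ) ^ (∑ i, c i) *
        (∏ i, (((a i) + c i).factorial : ℚ)) / ((((∑ i, a i) + (∑ i, c i) + m).factorial : ℚ)) =
      (∏ i, ((a i).factorial : ℚ)) * (ar.factorial : ℚ) /
        ((((∑ i, a i) + ar + m).factorial : ℚ)) := by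
  induction m with
  | zero => simp [Nat.factorial_ne_zero]
  | succ m ih =>
    rw [split]
    have hstep : ∀ c' ∈ (Fintype.piFinset (fun _ : Fin m => Finset.range (ar + 1))).filter
        (fun c => ∑ i, c i ≤ ar),
        (∑ b ∈ Finset.range (ar - ∑ i, c' i + 1),
          ((ar.factorial : ℚ) / (((ar - ∑ i, (Fin.cons b c' : Fin (m+1) → ℕ) i).factorial : ℚ) *
              ∏ i, (((Fin.cons b c' : Fin (m+1) → ℕ) i).factorial : ℚ))) *
            (-1 : ℚ) ^ (∑ i, (Fin.cons b c' : Fin (m+1) → ℕ) i) *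
            (∏ i, (((a i) + (Fin.cons b c' : Fin (m+1) → ℕ) i).factorial : ℚ)) /
            ((((∑ i, a i) + (∑ i, (Fin.cons b c' : Fin (m+1) → ℕ) i) + (m+1)).factorial : ℚ)))
        = (((a 0).factorial : ℚ) * ((((∑ i : Fin m, a i.succ) + ar + m).factorial : ℚ)) /
            ((((a 0) + (∑ i : Fin m, a i.succ) + ar + (m+1)).factorial : ℚ)))
          * (((ar.factorial : ℚ) / (((ar - ∑ i, c' i).factorial : ℚ) * ∏ i, ((c' i).factorial : ℚ))) *
            (-1 : ℚ) ^ (∑ i, c' i) *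
            (∏ i : Fin m, (((a i.succ) + c' i).factorial : ℚ)) /
            ((((∑ i : Fin m, a i.succ) + (∑ i, c' i) + m).factorial : ℚ))) := by
      intro c' hc'
      simp only [Finset.mem_filter] at hc'
      simp only [Fin.sum_univ_succ, Fin.prod_univ_succ, Fin.cons_zero, Fin.cons_succ]
      exact inner ar (∑ i, c' i) (a 0) (∑ i : Fin m, a i.succ) m
        (∏ i, ((c' i).factorial : ℚ)) (∏ i : Fin m, (((a i.succ) + c' i).factorial : ℚ))
        hc'.2 (by positivity) (by positivity)
    rw [Finset.sum_congr rfl hstep, ← Finset.mul_sum, ih (fun i => a i.succ)]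
    simp only [Fin.sum_univ_succ, Fin.prod_univ_succ]
    have h1 : (0:ℚ) < (((∑ i : Fin m, a i.succ) + ar + m).factorial : ℚ) := by positivity
    have h2 : (0:ℚ) < (((a 0) + (∑ i : Fin m, a i.succ) + ar + (m+1)).factorial : ℚ) := by positivity
    field_simp
end

section
/- For every integer r ≥ 1, the two polynomials A(r,d,g) = ∑_{i=0}^{r-1} ((-1)^i/(d-2r+2)) C(i+g+r-d-2, i) C(d-2r, r-1-i) C(d-r+1-i, r-i) and B(r,d,g) = ∑_{i=0}^{r-1} ((-1)^i/(r-i)) C(d-r-i+1, r-1-i) C(d-r-i, r-1-i) C(g, i) are equal as elements of ℚ[d,g]. -/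
open Finset

/-- The field `ℚ(d,g)` of rational functions in two variables `d, g`. -/
noncomputable abbrev RatF : Type := FractionRing (MvPolynomial (Fin 2) ℚ)

/-- The variable `d`. -/
noncomputable def dv : RatF := algebraMap (MvPolynomial (Fin 2) ℚ) RatF (MvPolynomial.X 0)

/-- The variable `g`. -/
noncomputable def gv : RatF := algebraMap (MvPolynomial (Fin 2) ℚ) RatF (MvPolynomial.X 1)

/-- Generalized binomial coefficient `C(x,k) = x(x-1)⋯(x-k+1)/k!`. -/
noncomputable def genBinom (x : RatF) (k : ℕ) : RatF :=
  (∏ j ∈ Finset.range k, (x - (j : ℕ))) / (k.factorial : RatF)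

set_option maxHeartbeats 1000000

lemma gB_zero (x : RatF) : genBinom x 0 = 1 := by simp [genBinom]

lemma fact_ne (k : ℕ) : ((k.factorial : ℕ) : RatF) ≠ 0 := by
  exact_mod_cast Nat.cast_ne_zero.mpr k.factorial_ne_zero

lemma gB_succ (x : RatF) (k : ℕ) :
    genBinom x (k + 1) = genBinom x k * (x - (k : RatF)) / ((k : RatF) + 1) := by
  have h1 := fact_ne k
  have h2 : ((k : RatF) + 1) ≠ 0 := Nat.cast_add_one_ne_zero k
  simp only [genBinom, prod_range_succ, Nat.factorial_succ]
  push_cast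
  rw [div_mul_eq_mul_div, div_div, div_eq_div_iff (by exact mul_ne_zero h2 h1) (by exact mul_ne_zero h1 h2)]
  ring

lemma gB_succ_mul (x : RatF) (k : ℕ) :
    ((k : RatF) + 1) * genBinom x (k + 1) = (x - (k : RatF)) * genBinom x k := by
  have h2 : ((k : RatF) + 1) ≠ 0 := Nat.cast_add_one_ne_zero k
  rw [gB_succ]; field_simp

lemma gB_neg (x : RatF) (k : ℕ) :
    (-1 : RatF) ^ k * genBinom x k = genBinom ((k : RatF) - 1 - x) k := by
  simp only [genBinom]
  rw [mul_div_assoc']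
  congr 1
  have h := Finset.prod_range_reflect (fun j => ((k : RatF) - 1 - x - (j : ℕ))) k
  rw [← h]
  have h2 : ∀ j ∈ range k, ((k : RatF) - 1 - x - ((k - 1 - j : ℕ) : RatF)) = (-1) * (x - (j : RatF)) := by
    intro j hj
    have hjk : j < k := Finset.mem_range.mp hj
    have h1 : 1 + j ≤ k := by omega
    have : ((k - 1 - j : ℕ) : RatF) = (k : RatF) - 1 - (j : RatF) := by
      push_cast [Nat.sub_sub, Nat.cast_sub h1]
      ring
    rw [this]; ring
  rw [Finset.prod_congr rfl h2, Finset.prod_mul_distrib, Finset.prod_const, Finset.card_range]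

lemma prod_nat (n k : ℕ) :
    (∏ j ∈ Finset.range k, (((n : ℕ) : RatF) - (j : ℕ))) = ((n.descFactorial k : ℕ) : RatF) := by
  induction k with
  | zero => simp
  | succ k ih =>
    rw [prod_range_succ, ih, Nat.descFactorial_succ]
    rcases lt_trichotomy k n with h | h | h
    · have : ((n - k : ℕ) : RatF) = (n : RatF) - (k : RatF) := by
        push_cast [Nat.cast_sub h.le]; ring
      push_cast
      rw [← this]
      push_cast [Nat.cast_sub h.le]
      ring
    · subst h
      simp
    · have : n.descFactorial k = 0 := Nat.descFactorial_eq_zero_iff_lt.mpr h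
      simp [this]

lemma gB_nat (n k : ℕ) : genBinom ((n : ℕ) : RatF) k = ((n.choose k : ℕ) : RatF) := by
  rw [genBinom, prod_nat, Nat.descFactorial_eq_factorial_mul_choose]
  push_cast
  rw [mul_comm, mul_div_assoc, div_self (fact_ne k), mul_one]

lemma gB_trinom (x : RatF) (k m : ℕ) :
    genBinom x k * genBinom (x - (k : RatF)) m
      = (((k + m).choose k : ℕ) : RatF) * genBinom x (k + m) := by
  have hnum : (∏ j ∈ Finset.range (k + m), (x - (j : ℕ)))
      = (∏ j ∈ Finset.range k, (x - (j : ℕ)))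
        * ∏ j ∈ Finset.range m, (x - (k : RatF) - (j : ℕ)) := by
    rw [Finset.prod_range_add]
    congr 1
    refine Finset.prod_congr rfl fun j _ => ?_
    push_cast
    ring
  have key : (((k + m).choose k * k.factorial * m.factorial : ℕ) : RatF)
      = (((k + m).factorial : ℕ) : RatF) := by
    have h := Nat.choose_mul_factorial_mul_factorial (Nat.le_add_right k m)
    rw [Nat.add_sub_cancel_left] at h
    exact_mod_cast congrArg (fun t : ℕ => ((t : ℕ) : RatF)) h
  simp only [genBinom]
  rw [hnum, div_mul_div_comm, mul_div_assoc',
    div_eq_div_iff (mul_ne_zero (fact_ne k) (fact_ne m)) (fact_ne (k + m))]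
  rw [← key]
  push_cast
  ring

lemma gB_vandermonde (x y : RatF) (n : ℕ) :
    genBinom (x + y) n = ∑ k ∈ Finset.range (n + 1), genBinom x k * genBinom y (n - k) := by
  induction n with
  | zero => simp [gB_zero]
  | succ n ih =>
    have hn1 : ((n : RatF) + 1) ≠ 0 := Nat.cast_add_one_ne_zero n
    -- multiply both sides by (n+1)
    apply mul_left_cancel₀ hn1
    rw [gB_succ_mul, ih]
    -- (x+y-n) * Σ = Σ ((x-k)+(y-(n-k))) term
    have split : (x + y - (n : RatF)) * ∑ k ∈ Finset.range (n + 1), genBinom x k * genBinom y (n - k)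
        = (∑ k ∈ Finset.range (n + 2), (k : RatF) * (genBinom x k * genBinom y (n + 1 - k)))
          + ∑ k ∈ Finset.range (n + 2), ((n + 1 - k : ℕ) : RatF) * (genBinom x k * genBinom y (n + 1 - k)) := by
      rw [Finset.mul_sum]
      rw [Finset.sum_range_succ' (fun k => (k : RatF) * (genBinom x k * genBinom y (n + 1 - k))) (n + 1)]
      rw [Finset.sum_range_succ (fun k => ((n + 1 - k : ℕ) : RatF) * (genBinom x k * genBinom y (n + 1 - k))) (n + 1)]
      simp only [Nat.cast_zero, zero_mul, add_zero, Nat.sub_self, Nat.cast_zero, zero_mul, add_zero]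
      rw [← Finset.sum_add_distrib]
      refine Finset.sum_congr rfl fun k hk => ?_
      have hkn : k ≤ n := Nat.lt_succ_iff.mp (Finset.mem_range.mp hk)
      have e1 : n + 1 - (k + 1) = n - k := by omega
      have e2 : (n + 1 - k) = (n - k) + 1 := by omega
      rw [e1, e2]
      have hx := gB_succ_mul x k
      have hy := gB_succ_mul y (n - k)
      have ecast : ((n - k : ℕ) : RatF) = (n : RatF) - (k : RatF) := by
        push_cast [Nat.cast_sub hkn]; ring
      push_cast
      calc (x + y - (n : RatF)) * (genBinom x k * genBinom y (n - k))
          = (x - (k : RatF)) * genBinom x k * genBinom y (n - k)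
            + genBinom x k * ((y - ((n - k : ℕ) : RatF)) * genBinom y (n - k)) := by
              rw [ecast]; ring
        _ = _ := by
              rw [← hx, ← hy, ecast]
              push_cast
              ring
    rw [split, ← Finset.sum_add_distrib, Finset.mul_sum]
    refine Finset.sum_congr rfl fun k hk => ?_
    have hkn : k ≤ n + 1 := Nat.lt_succ_iff.mp (Finset.mem_range.mp hk)
    have : ((n + 1 - k : ℕ) : RatF) = (n : RatF) + 1 - (k : RatF) := by
      push_cast [Nat.cast_sub hkn]; ring
    rw [this]
    ring

lemma gB_neg' (x : RatF) (k : ℕ) :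
    genBinom x k = (-1 : RatF) ^ k * genBinom ((k : RatF) - 1 - x) k := by
  rw [← gB_neg, ← mul_assoc, ← mul_pow]
  simp

lemma dv_sub_nat_ne (m : ℕ) : dv - ((m : ℕ) : RatF) ≠ 0 := by
  have hd : dv - ((m : ℕ) : RatF)
      = algebraMap (MvPolynomial (Fin 2) ℚ) RatF (MvPolynomial.X 0 - (m : MvPolynomial (Fin 2) ℚ)) := by
    rw [map_sub, map_natCast, dv]
  rw [hd]
  intro h
  have h2 : (MvPolynomial.X 0 - (m : MvPolynomial (Fin 2) ℚ)) = 0 := by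
    apply IsFractionRing.injective (MvPolynomial (Fin 2) ℚ) RatF
    simpa using h
  have h3 := congrArg (MvPolynomial.eval (fun _ => (m + 1 : ℚ))) h2
  simp at h3

lemma triangle (n : ℕ) (f : ℕ → ℕ → RatF) :
    ∑ i ∈ Finset.range n, ∑ j ∈ Finset.range (i + 1), f i j
      = ∑ j ∈ Finset.range n, ∑ i ∈ Finset.Ico j n, f i j := by
  have h := Finset.sum_Ico_Ico_comm 0 n (fun i j => f j i)
  simp only [Finset.range_eq_Ico]
  exact h.symm

lemma innerSumKey (r j : ℕ) (hj : j < r) :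
    ∑ i ∈ Finset.Ico j r,
        (((-1 : RatF) ^ i / (dv - 2 * (r : RatF) + 2)) *
          genBinom ((i : RatF) + (r : RatF) - dv - 2) (i - j) *
          genBinom (dv - 2 * (r : RatF)) (r - 1 - i) *
          genBinom (dv - (r : RatF) + 1 - (i : RatF)) (r - i))
      = ((-1 : RatF) ^ j / (dv - 2 * (r : RatF) + 2)) *
          genBinom (dv - (r : RatF) - (j : RatF) + 1) (r - j) *
          genBinom (dv - (r : RatF) - (j : RatF)) (r - 1 - j) := by
  rw [Finset.sum_Ico_eq_sum_range]
  set n := r - j with hn'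
  have hn : 1 ≤ n := by omega
  have hrj : ((n : ℕ) : RatF) = (r : RatF) - (j : RatF) := by
    rw [hn', Nat.cast_sub hj.le]
  have hsum : ∀ k ∈ Finset.range n,
      (((-1 : RatF) ^ (j + k) / (dv - 2 * (r : RatF) + 2)) *
          genBinom (((j + k : ℕ) : RatF) + (r : RatF) - dv - 2) ((j + k) - j) *
          genBinom (dv - 2 * (r : RatF)) (r - 1 - (j + k)) *
          genBinom (dv - (r : RatF) + 1 - ((j + k : ℕ) : RatF)) (r - (j + k)))
        = ((-1 : RatF) ^ j / (dv - 2 * (r : RatF) + 2)) *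
            genBinom (dv - (r : RatF) - (j : RatF) + 1) n *
            (((n.choose k : ℕ) : RatF) * genBinom (dv - 2 * (r : RatF)) (n - 1 - k)) := by
    intro k hk
    have hkn : k < n := Finset.mem_range.mp hk
    have e1 : j + k - j = k := by omega
    have e2 : r - 1 - (j + k) = n - 1 - k := by omega
    have e3 : r - (j + k) = n - k := by omega
    rw [e1, e2, e3]
    have hneg := gB_neg' (((j + k : ℕ) : RatF) + (r : RatF) - dv - 2) k
    have harg : ((k : RatF) - 1 - (((j + k : ℕ) : RatF) + (r : RatF) - dv - 2))
        = dv - (r : RatF) - (j : RatF) + 1 := by push_cast; ring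
    have harg2 : dv - (r : RatF) + 1 - ((j + k : ℕ) : RatF)
        = (dv - (r : RatF) - (j : RatF) + 1) - (k : RatF) := by push_cast; ring
    rw [hneg, harg, harg2]
    have e4 : k + (n - k) = n := by omega
    have htr := gB_trinom (dv - (r : RatF) - (j : RatF) + 1) k (n - k)
    rw [e4] at htr
    have hsgn : (-1 : RatF) ^ (j + k) * (-1) ^ k = (-1) ^ j := by
      rw [pow_add, mul_assoc, ← pow_add]
      simp [← two_mul, pow_mul]
    calc ((-1 : RatF) ^ (j + k) / (dv - 2 * (r : RatF) + 2)) *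
            ((-1 : RatF) ^ k * genBinom (dv - (r : RatF) - (j : RatF) + 1) k) *
            genBinom (dv - 2 * (r : RatF)) (n - 1 - k) *
            genBinom (dv - (r : RatF) - (j : RatF) + 1 - (k : RatF)) (n - k)
        = (((-1 : RatF) ^ (j + k) * (-1) ^ k) / (dv - 2 * (r : RatF) + 2)) *
            (genBinom (dv - (r : RatF) - (j : RatF) + 1) k *
              genBinom (dv - (r : RatF) - (j : RatF) + 1 - (k : RatF)) (n - k)) *
            genBinom (dv - 2 * (r : RatF)) (n - 1 - k) := by ring
      _ = _ := by rw [hsgn, htr]; ring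
  rw [Finset.sum_congr rfl hsum, ← Finset.mul_sum]
  have hV := gB_vandermonde ((n : ℕ) : RatF) (dv - 2 * (r : RatF)) (n - 1)
  have e5 : n - 1 + 1 = n := by omega
  rw [e5] at hV
  simp only [gB_nat] at hV
  rw [← hV]
  have harg3 : ((n : ℕ) : RatF) + (dv - 2 * (r : RatF)) = dv - (r : RatF) - (j : RatF) := by
    rw [hrj]; ring
  have e6 : n - 1 = r - 1 - j := by omega
  rw [harg3, e6]

/-- For every `r ≥ 1`, the polynomials (rational functions)
`A(r,d,g) = ∑_{i=0}^{r-1} ((-1)^i/(d-2r+2)) C(i+g+r-d-2,i) C(d-2r,r-1-i) C(d-r+1-i,r-i)`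
and `B(r,d,g) = ∑_{i=0}^{r-1} ((-1)^i/(r-i)) C(d-r-i+1,r-1-i) C(d-r-i,r-1-i) C(g,i)`
coincide in `ℚ(d,g)` (hence as elements of `ℚ[d,g]`). -/
theorem stmt15 (r : ℕ) (hr : 1 ≤ r) :
    ∑ i ∈ Finset.range r,
        ((-1 : RatF) ^ i / (dv - 2 * (r : RatF) + 2)) *
          genBinom ((i : RatF) + gv + (r : RatF) - dv - 2) i *
          genBinom (dv - 2 * (r : RatF)) (r - 1 - i) *
          genBinom (dv - (r : RatF) + 1 - (i : RatF)) (r - i) =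
      ∑ i ∈ Finset.range r,
        ((-1 : RatF) ^ i / ((r - i : ℕ) : RatF)) *
          genBinom (dv - (r : RatF) - (i : RatF) + 1) (r - 1 - i) *
          genBinom (dv - (r : RatF) - (i : RatF)) (r - 1 - i) *
          genBinom gv i := by
  have hD : dv - 2 * (r : RatF) + 2 ≠ 0 := by
    have h := dv_sub_nat_ne (2 * r - 2)
    have hc : ((2 * r - 2 : ℕ) : RatF) = 2 * (r : RatF) - 2 := by
      rw [Nat.cast_sub (by omega : 2 ≤ 2 * r)]; push_cast; ring
    intro h0
    apply h
    rw [hc]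
    linear_combination h0
  set F : ℕ → ℕ → RatF := fun i j =>
    genBinom gv j *
      (((-1 : RatF) ^ i / (dv - 2 * (r : RatF) + 2)) *
        genBinom ((i : RatF) + (r : RatF) - dv - 2) (i - j) *
        genBinom (dv - 2 * (r : RatF)) (r - 1 - i) *
        genBinom (dv - (r : RatF) + 1 - (i : RatF)) (r - i)) with hF
  calc
    ∑ i ∈ Finset.range r,
        ((-1 : RatF) ^ i / (dv - 2 * (r : RatF) + 2)) *
          genBinom ((i : RatF) + gv + (r : RatF) - dv - 2) i *
          genBinom (dv - 2 * (r : RatF)) (r - 1 - i) *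
          genBinom (dv - (r : RatF) + 1 - (i : RatF)) (r - i)
      = ∑ i ∈ Finset.range r, ∑ j ∈ Finset.range (i + 1), F i j := by
        refine Finset.sum_congr rfl fun i _ => ?_
        have hx : (i : RatF) + gv + (r : RatF) - dv - 2
            = gv + ((i : RatF) + (r : RatF) - dv - 2) := by ring
        rw [hx, gB_vandermonde, Finset.mul_sum, Finset.sum_mul, Finset.sum_mul]
        exact Finset.sum_congr rfl fun j _ => by rw [hF]; ring
    _ = ∑ j ∈ Finset.range r, ∑ i ∈ Finset.Ico j r, F i j := triangle r F
    _ = ∑ j ∈ Finset.range r,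
          genBinom gv j *
            (((-1 : RatF) ^ j / (dv - 2 * (r : RatF) + 2)) *
              genBinom (dv - (r : RatF) - (j : RatF) + 1) (r - j) *
              genBinom (dv - (r : RatF) - (j : RatF)) (r - 1 - j)) := by
        refine Finset.sum_congr rfl fun j hj => ?_
        have hjr : j < r := Finset.mem_range.mp hj
        rw [hF, ← Finset.mul_sum]
        congr 1
        have h := innerSumKey r j hjr
        calc ∑ i ∈ Finset.Ico j r,
              (((-1 : RatF) ^ i / (dv - 2 * (r : RatF) + 2)) *
                genBinom ((i : RatF) + (r : RatF) - dv - 2) (i - j) *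
                genBinom (dv - 2 * (r : RatF)) (r - 1 - i) *
                genBinom (dv - (r : RatF) + 1 - (i : RatF)) (r - i))
            = ((-1 : RatF) ^ j / (dv - 2 * (r : RatF) + 2)) *
                genBinom (dv - (r : RatF) - (j : RatF) + 1) (r - j) *
                genBinom (dv - (r : RatF) - (j : RatF)) (r - 1 - j) := h
          _ = _ := by ring
    _ = ∑ i ∈ Finset.range r,
          ((-1 : RatF) ^ i / ((r - i : ℕ) : RatF)) *
            genBinom (dv - (r : RatF) - (i : RatF) + 1) (r - 1 - i) *
            genBinom (dv - (r : RatF) - (i : RatF)) (r - 1 - i) *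
            genBinom gv i := by
        refine Finset.sum_congr rfl fun j hj => ?_
        have hjr : j < r := Finset.mem_range.mp hj
        set m := r - 1 - j with hm'
        have hm : ((m : RatF) + 1) ≠ 0 := Nat.cast_add_one_ne_zero m
        have hrj : r - j = m + 1 := by omega
        have hcast : ((r - j : ℕ) : RatF) = (m : RatF) + 1 := by
          rw [hrj]; push_cast; ring
        have hkey := gB_succ (dv - (r : RatF) - (j : RatF) + 1) m
        have hxm : dv - (r : RatF) - (j : RatF) + 1 - (m : RatF)
            = dv - 2 * (r : RatF) + 2 := by
          have hmc : ((m : ℕ) : RatF) = (r : RatF) - 1 - (j : RatF) := by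
            rw [show m = r - (1 + j) from by omega, Nat.cast_sub (by omega : 1 + j ≤ r)]
            push_cast; ring
          rw [hmc]; ring
        rw [hxm] at hkey
        rw [hrj, hkey]
        push_cast
        field_simp
end
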